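/- There exist a constant c > 0 and k₀ such that for every k ≥ k₀ and every truthful, individually rational randomized mechanism (x,p) for the environment with k text ads and one image ad, there exists a valuation profile v in the support of D with CoreRev(v) ≥ c·ln(ln k)·∑_i p_i(v). Hence every truthful randomized mechanism has core-competitive factor Ω(ln(ln k)). -/

import Mathlib

open Classical

noncomputable section

namespace CoreComp

/-- Total value of a set of agents. -/
def val {α : Type*} (v : α → ℝ) (X : Finset α) : ℝ := ∑ i ∈ X, v i

/-- Maximum welfare achievable by a feasible set contained in `T`. -/
def maxW {α : Type*} (F : Set (Finset α)) (v : α → ℝ) (T : Finset α) : ℝ :=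
  sSup {r | ∃ X ∈ F, X ⊆ T ∧ r = val v X}

/-- Coalition value function on `Option α`, where `none` is the auctioneer. -/
def w {α : Type*} (F : Set (Finset α)) (v : α → ℝ) (S : Finset (Option α)) : ℝ :=
  if none ∈ S then maxW F v S.eraseNone else 0

/-- The core of the associated cooperative game. -/
def Core {α : Type*} [Fintype α] (F : Set (Finset α)) (v : α → ℝ) :
    Set (Option α → ℝ) :=
  {u | (∀ i, 0 ≤ u i) ∧ (∑ i, u i) = w F v Finset.univ ∧
    ∀ S : Finset (Option α), w F v S ≤ ∑ i ∈ S, u i}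

/-- Core revenue benchmark: the minimum auctioneer utility over core imputations. -/
def CoreRev {α : Type*} [Fintype α] (F : Set (Finset α)) (v : α → ℝ) : ℝ :=
  sInf {r | ∃ u ∈ Core F v, r = u none}

end CoreComp

namespace CoreComp

/-- `H_k = ∑_{j=1}^k 1/j`. -/
def Hk (k : ℕ) : ℝ := ∑ j ∈ Finset.range k, (1 : ℝ) / (j + 1)

/-- `H = ⌈H_k⌉`. -/
def Hceil (k : ℕ) : ℕ := ⌈Hk k⌉₊

/-- A text-value profile in the support of `D`: each text ad's value is some `1/j`,
`j ∈ {1, …, k}`; the profile encoded by `a` has `v^T_i = 1/(a i + 1)`.  Averaging over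
all `a : Fin k → Fin k` is exactly averaging over i.i.d. uniform text values. -/
def tprof (k : ℕ) (a : Fin k → Fin k) : Fin k → ℝ := fun i => 1 / ((a i : ℕ) + 1)

/-- An image value in the support of `D`: `v^I = H/(c+1)`, `c + 1 ∈ {1, …, H}`. -/
def imval (k : ℕ) (c : Fin (Hceil k)) : ℝ := (Hceil k : ℝ) / ((c : ℕ) + 1)

/-- Myerson payment of text ad `i` for allocation rule `xT`, at text profile `t` and
image value `b`. -/
def payT {k : ℕ} (xT : (Fin k → ℝ) → ℝ → Fin k → ℝ)
    (t : Fin k → ℝ) (b : ℝ) (i : Fin k) : ℝ :=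
  t i * xT t b i - ∫ s in (0:ℝ)..(t i), xT (Function.update t i s) b i

/-- Myerson payment of the image ad for allocation rule `xI`. -/
def payI {k : ℕ} (xI : (Fin k → ℝ) → ℝ → ℝ) (t : Fin k → ℝ) (b : ℝ) : ℝ :=
  b * xI t b - ∫ s in (0:ℝ)..b, xI t s

end CoreComp

namespace CoreComp

/-- Feasibility for `k` text ads and one image ad: any set of text ads, or the single
image ad. -/
def Feas1 (k : ℕ) : Set (Finset (Fin k ⊕ Unit)) :=
  {X | (∀ a ∈ X, ∃ i : Fin k, a = Sum.inl i) ∨ X = {Sum.inr ()}}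

end CoreComp

namespace CoreComp

open MeasureTheory intervalIntegral Finset

lemma grid_bound (M : ℝ) (hM : 0 < M) (g : ℝ → ℝ) (hg : Monotone g)
    (h0 : ∀ s, 0 ≤ g s) (h1 : ∀ s, g s ≤ 1) (n : ℕ) :
    ∑ j ∈ Finset.range n, (M/(j+1) * g (M/(j+1)) - ∫ s in (0:ℝ)..(M/(j+1)), g s) ≤ M := by
  set q : ℕ → ℝ := fun j => M / (j + 1) with hq
  have hqpos : ∀ j : ℕ, 0 < q j := fun j => by positivity
  have hqanti : ∀ j : ℕ, q (j + 1) ≤ q j := by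
    intro j
    apply div_le_div_of_nonneg_left hM.le (by positivity)
    push_cast; linarith
  have hint : ∀ a b : ℝ, IntervalIntegrable g volume a b := fun a b => hg.intervalIntegrable
  set J : ℕ → ℝ := fun j => ∫ s in (0:ℝ)..(q j), g s with hJ
  have Jnonneg : ∀ j, 0 ≤ J j := by
    intro j
    exact intervalIntegral.integral_nonneg (hqpos j).le (fun x _ => h0 x)
  have step : ∀ j : ℕ, J (j+1) + (q j - q (j+1)) * g (q (j+1)) ≤ J j := by
    intro j
    have hadd : J (j+1) + (∫ s in (q (j+1))..(q j), g s) = J j := by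
      exact integral_add_adjacent_intervals (hint _ _) (hint _ _)
    have hmono : (q j - q (j+1)) * g (q (j+1)) ≤ ∫ s in (q (j+1))..(q j), g s := by
      have := intervalIntegral.integral_mono_on (μ := volume)
        (f := fun _ => g (q (j+1))) (g := g) (hqanti j)
        (intervalIntegrable_const) (hint _ _)
        (fun x hx => hg hx.1)
      simpa [smul_eq_mul, mul_comm] using this
    linarith
  have chain : ∀ j l : ℕ, j ≤ l →
      J l + ∑ m ∈ Finset.Ico j l, (q m - q (m+1)) * g (q (m+1)) ≤ J j := by
    intro j
    refine Nat.le_induction ?_ ?_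
    · simp
    · intro l hjl ih
      rw [Finset.sum_Ico_succ_top hjl]
      have := step l
      linarith
  rcases n with _ | N
  · simpa using hM.le
  have key : ∀ j ∈ Finset.range (N+1),
      ∑ m ∈ Finset.Ico j N, (q m - q (m+1)) * g (q (m+1)) ≤ J j := by
    intro j hj
    have hjN : j ≤ N := Nat.lt_succ_iff.mp (Finset.mem_range.mp hj)
    have := chain j N hjN
    have := Jnonneg N
    linarith
  have hsum1 : ∑ j ∈ Finset.range (N+1), ∑ m ∈ Finset.Ico j N, (q m - q (m+1)) * g (q (m+1))
      ≤ ∑ j ∈ Finset.range (N+1), J j := Finset.sum_le_sum key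
  have hswap : ∑ j ∈ Finset.range (N+1), ∑ m ∈ Finset.Ico j N, (q m - q (m+1)) * g (q (m+1))
      = ∑ m ∈ Finset.range N, ((m:ℝ)+1) * ((q m - q (m+1)) * g (q (m+1))) := by
    have h1' : ∀ j : ℕ, Finset.Ico j N = (Finset.range N).filter (fun m => j ≤ m) := by
      intro j; ext m; simp [Finset.mem_Ico, Finset.mem_filter, Finset.mem_range, and_comm]
    calc ∑ j ∈ Finset.range (N+1), ∑ m ∈ Finset.Ico j N, (q m - q (m+1)) * g (q (m+1))
        = ∑ j ∈ Finset.range (N+1), ∑ m ∈ Finset.range N,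
            (if j ≤ m then (q m - q (m+1)) * g (q (m+1)) else 0) := by
          refine Finset.sum_congr rfl (fun j _ => ?_)
          rw [h1' j, Finset.sum_filter]
      _ = ∑ m ∈ Finset.range N, ∑ j ∈ Finset.range (N+1),
            (if j ≤ m then (q m - q (m+1)) * g (q (m+1)) else 0) := Finset.sum_comm
      _ = ∑ m ∈ Finset.range N, ((m:ℝ)+1) * ((q m - q (m+1)) * g (q (m+1))) := by
          refine Finset.sum_congr rfl (fun m hm => ?_)
          have hmN : m < N := Finset.mem_range.mp hm
          have hfilter : (Finset.range (N+1)).filter (fun j => j ≤ m) = Finset.range (m+1) := by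
            ext j; simp only [Finset.mem_filter, Finset.mem_range]; omega
          rw [← Finset.sum_filter, hfilter, Finset.sum_const, Finset.card_range,
            nsmul_eq_mul]
          push_cast; ring
  have hterm : ∀ m : ℕ, ((m:ℝ)+1) * ((q m - q (m+1)) * g (q (m+1))) = q (m+1) * g (q (m+1)) := by
    intro m
    have h1' : ((m:ℝ)+1) * (q m - q (m+1)) = q (m+1) := by
      simp only [hq]
      have hm1 : ((m:ℝ)+1) ≠ 0 := by positivity
      have hm2 : ((m:ℝ)+1+1) ≠ 0 := by positivity
      field_simp
      push_cast; ring
    rw [← mul_assoc, h1']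
  have hsum2 : ∑ m ∈ Finset.range N, q (m+1) * g (q (m+1)) ≤ ∑ j ∈ Finset.range (N+1), J j := by
    calc ∑ m ∈ Finset.range N, q (m+1) * g (q (m+1))
        = ∑ m ∈ Finset.range N, ((m:ℝ)+1) * ((q m - q (m+1)) * g (q (m+1))) :=
          (Finset.sum_congr rfl (fun m _ => hterm m)).symm
      _ ≤ ∑ j ∈ Finset.range (N+1), J j := hswap ▸ hsum1
  have hreindex : ∑ j ∈ Finset.range (N+1), q j * g (q j)
      = (∑ m ∈ Finset.range N, q (m+1) * g (q (m+1))) + q 0 * g (q 0) :=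
    Finset.sum_range_succ' _ N
  have hfinal : ∑ j ∈ Finset.range (N+1), (q j * g (q j) - J j) ≤ q 0 * g (q 0) := by
    rw [Finset.sum_sub_distrib, hreindex]
    linarith
  have hq0 : q 0 * g (q 0) ≤ M := by
    have : q 0 = M := by simp [hq]
    rw [this]
    nlinarith [h1 M, h0 M]
  calc ∑ j ∈ Finset.range (N+1), (M/(j+1) * g (M/(j+1)) - ∫ s in (0:ℝ)..(M/(j+1)), g s)
      = ∑ j ∈ Finset.range (N+1), (q j * g (q j) - J j) := by
        refine Finset.sum_congr rfl (fun j _ => ?_); simp [hq, hJ]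
    _ ≤ q 0 * g (q 0) := hfinal
    _ ≤ M := hq0


lemma sq_sum_le' (k : ℕ) : ∑ j ∈ Finset.range k, (1/((j:ℝ)+1))^2 ≤ 2 := by
  have h : ∀ n : ℕ, ∑ j ∈ Finset.range (n+1), (1/((j:ℝ)+1))^2 ≤ 2 - 1/((n:ℝ)+1) := by
    intro n
    induction n with
    | zero => norm_num
    | succ n ih =>
      rw [Finset.sum_range_succ]
      have hterm : (1/((n:ℝ)+1+1))^2 ≤ 1/((n:ℝ)+1) - 1/((n:ℝ)+1+1) := by
        have h1 : (0:ℝ) < (n:ℝ)+1 := by positivity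
        have h2 : (0:ℝ) < (n:ℝ)+1+1 := by positivity
        rw [div_sub_div _ _ (ne_of_gt h1) (ne_of_gt h2)]
        rw [div_pow, div_le_div_iff₀ (by positivity) (by positivity)]
        ring_nf
        nlinarith
      push_cast
      push_cast at ih hterm
      linarith
  rcases k with _ | n
  · simp
  · have := h n
    have h1 : (0:ℝ) < (n:ℝ)+1 := by positivity
    have : (0:ℝ) ≤ 1/((n:ℝ)+1) := by positivity
    linarith [h n]

lemma log_le_Hk (k : ℕ) : Real.log ((k:ℝ)+1) ≤ Hk k := by
  have htel : ∑ j ∈ Finset.range k, (Real.log ((j:ℝ)+1+1) - Real.log ((j:ℝ)+1))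
      = Real.log ((k:ℝ)+1) := by
    have := Finset.sum_range_sub (f := fun j : ℕ => Real.log ((j:ℝ)+1)) k
    simp only [Nat.cast_add, Nat.cast_one] at this
    rw [this]
    simp
  rw [← htel]
  unfold Hk
  refine Finset.sum_le_sum (fun j _ => ?_)
  have h1 : (0:ℝ) < (j:ℝ)+1 := by positivity
  have h2 : (0:ℝ) < (j:ℝ)+1+1 := by positivity
  rw [← Real.log_div (ne_of_gt h2) (ne_of_gt h1)]
  have h3 : ((j:ℝ)+1+1)/((j:ℝ)+1) = 1 + 1/((j:ℝ)+1) := by field_simp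
  rw [h3]
  have := Real.log_le_sub_one_of_pos (x := 1 + 1/((j:ℝ)+1)) (by positivity)
  linarith

variable {k : ℕ}

lemma val_le_max (t : Fin k → ℝ) (b : ℝ) (ht : ∀ i, 0 ≤ t i) (hb : 0 ≤ b) :
    ∀ X ∈ Feas1 k, val (Sum.elim t fun _ => b) X ≤ max (∑ i, t i) b := by
  intro X hX
  set v : Fin k ⊕ Unit → ℝ := Sum.elim t fun _ => b with hv
  have hvnn : ∀ x, 0 ≤ v x := by
    intro x; rcases x with i | u
    · simpa [hv] using ht i
    · simpa [hv] using hb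
  rcases hX with hX | rfl
  · have hsub : X ⊆ Finset.univ.image Sum.inl := by
      intro x hx; rcases hX x hx with ⟨i, rfl⟩; simp
    have h1 : val v X ≤ val v (Finset.univ.image Sum.inl) :=
      Finset.sum_le_sum_of_subset_of_nonneg hsub (fun x _ _ => hvnn x)
    have h2 : val v (Finset.univ.image Sum.inl) = ∑ i, t i := by
      unfold val
      rw [Finset.sum_image (fun _ _ _ _ h => Sum.inl.inj h)]
      simp [hv]
    exact (h1.trans h2.le).trans (le_max_left _ _)
  · have : val v {Sum.inr ()} = b := by simp [val, hv]
    rw [this]; exact le_max_right _ _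

lemma maxW_bddAbove (t : Fin k → ℝ) (b : ℝ) (ht : ∀ i, 0 ≤ t i) (hb : 0 ≤ b)
    (T : Finset (Fin k ⊕ Unit)) :
    BddAbove {r | ∃ X ∈ Feas1 k, X ⊆ T ∧ r = val (Sum.elim t fun _ => b) X} := by
  refine ⟨max (∑ i, t i) b, ?_⟩
  rintro r ⟨X, hX, _, rfl⟩
  exact val_le_max t b ht hb X hX

lemma maxW_nonempty (t : Fin k → ℝ) (b : ℝ) (T : Finset (Fin k ⊕ Unit)) :
    Set.Nonempty {r | ∃ X ∈ Feas1 k, X ⊆ T ∧ r = val (Sum.elim t fun _ => b) X} :=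
  ⟨0, ∅, Or.inl (by simp), Finset.empty_subset _, by simp [val]⟩

lemma maxW_le_max (t : Fin k → ℝ) (b : ℝ) (ht : ∀ i, 0 ≤ t i) (hb : 0 ≤ b)
    (T : Finset (Fin k ⊕ Unit)) :
    maxW (Feas1 k) (Sum.elim t fun _ => b) T ≤ max (∑ i, t i) b := by
  refine csSup_le (maxW_nonempty t b T) ?_
  rintro r ⟨X, hX, _, rfl⟩
  exact val_le_max t b ht hb X hX

lemma allText_feas : (Finset.univ.image Sum.inl : Finset (Fin k ⊕ Unit)) ∈ Feas1 k := by
  left; intro a ha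
  rcases Finset.mem_image.mp ha with ⟨i, _, rfl⟩
  exact ⟨i, rfl⟩

lemma val_allText (t : Fin k → ℝ) (b : ℝ) :
    val (Sum.elim t fun _ => b) ((Finset.univ.image Sum.inl : Finset (Fin k ⊕ Unit))) = ∑ i, t i := by
  unfold val
  rw [Finset.sum_image (fun _ _ _ _ h => Sum.inl.inj h)]
  simp

lemma maxW_univ (t : Fin k → ℝ) (b : ℝ) (ht : ∀ i, 0 ≤ t i) (hb : 0 ≤ b) :
    maxW (Feas1 k) (Sum.elim t fun _ => b) Finset.univ = max (∑ i, t i) b := by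
  refine IsGreatest.csSup_eq ⟨?_, ?_⟩
  · rcases le_total (∑ i, t i) b with h | h
    · rw [max_eq_right h]
      exact ⟨{Sum.inr ()}, Or.inr rfl, Finset.subset_univ _, by simp [val]⟩
    · rw [max_eq_left h]
      exact ⟨Finset.univ.image Sum.inl, allText_feas, Finset.subset_univ _,
        (val_allText t b).symm⟩
  · rintro r ⟨X, hX, _, rfl⟩
    exact val_le_max t b ht hb X hX

lemma eraseNone_univ {α : Type*} [Fintype α] [DecidableEq α] :
    (Finset.univ : Finset (Option α)).eraseNone = Finset.univ := by
  ext x; simp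

lemma w_univ (t : Fin k → ℝ) (b : ℝ) (ht : ∀ i, 0 ≤ t i) (hb : 0 ≤ b) :
    w (Feas1 k) (Sum.elim t fun _ => b) Finset.univ = max (∑ i, t i) b := by
  unfold w
  rw [if_pos (Finset.mem_univ _), eraseNone_univ, maxW_univ t b ht hb]

lemma coreRev_ge_min (t : Fin k → ℝ) (b : ℝ) (ht : ∀ i, 0 < t i) (hb : 0 < b) :
    min (∑ i, t i) b ≤ CoreRev (Feas1 k) (Sum.elim t fun _ => b) := by
  set v : Fin k ⊕ Unit → ℝ := Sum.elim t fun _ => b with hv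
  have ht' : ∀ i, 0 ≤ t i := fun i => (ht i).le
  have hW0 : 0 ≤ max (∑ i, t i) b := le_trans hb.le (le_max_right _ _)
  -- the canonical core point
  set ustar : Option (Fin k ⊕ Unit) → ℝ := fun o => if o = none then max (∑ i, t i) b else 0 with hustar
  have hustar_core : ustar ∈ Core (Feas1 k) v := by
    refine ⟨?_, ?_, ?_⟩
    · intro o; by_cases h : o = none <;> simp [hustar, h, hW0]
    · rw [w_univ t b ht' hb.le]
      rw [Fintype.sum_option]
      simp [hustar]
    · intro S
      unfold w
      split_ifs with hS
      · refine le_trans (maxW_le_max t b ht' hb.le _) ?_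
        have heq : max (∑ i, t i) b = ustar none := by simp [hustar]
        rw [heq]
        exact Finset.single_le_sum (f := ustar)
          (fun o _ => by by_cases h : o = none <;> simp [hustar, h, hW0]) hS
      · exact Finset.sum_nonneg (fun o _ => by by_cases h : o = none <;> simp [hustar, h, hW0])
  refine le_csInf ⟨max (∑ i, t i) b, ustar, hustar_core, by simp [hustar]⟩ ?_
  rintro r ⟨u, ⟨hnn, hsum, hcons⟩, rfl⟩
  -- abbreviations
  set A : ℝ := ∑ i : Fin k, u (some (Sum.inl i)) with hA
  set B : ℝ := u (some (Sum.inr ())) with hB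
  have hA0 : 0 ≤ A := Finset.sum_nonneg (fun i _ => hnn _)
  have hB0 : 0 ≤ B := hnn _
  -- total
  have hsum' : u none + A + B = max (∑ i, t i) b := by
    rw [w_univ t b ht' hb.le] at hsum
    rw [← hsum, Fintype.sum_option, Fintype.sum_sum_type]
    simp only [hA, hB, Fintype.univ_unit, Finset.sum_singleton]
    ring
  -- image coalition
  have hc1 : b ≤ u none + B := by
    have hmem : (none : Option (Fin k ⊕ Unit)) ∈ ({none, some (Sum.inr ())} :
        Finset (Option (Fin k ⊕ Unit))) := by simp
    have hw : b ≤ w (Feas1 k) v ({none, some (Sum.inr ())}) := by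
      unfold w
      rw [if_pos hmem]
      refine le_csSup (maxW_bddAbove t b ht' hb.le _) ?_
      refine ⟨{Sum.inr ()}, Or.inr rfl, ?_, by simp [val, hv]⟩
      intro x hx
      rw [Finset.mem_eraseNone]
      simp at hx
      simp [hx]
    refine hw.trans ?_
    have := hcons ({none, some (Sum.inr ())})
    refine le_trans this (le_of_eq ?_)
    rw [Finset.sum_pair (by simp)]
  -- text coalition
  have hc2 : (∑ i, t i) ≤ u none + A := by
    set S₂ : Finset (Option (Fin k ⊕ Unit)) :=
      insert none (Finset.univ.image (fun i : Fin k => some (Sum.inl i))) with hS₂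
    have hw : (∑ i, t i) ≤ w (Feas1 k) v S₂ := by
      unfold w
      rw [if_pos (Finset.mem_insert_self _ _)]
      refine le_csSup (maxW_bddAbove t b ht' hb.le _) ?_
      refine ⟨Finset.univ.image Sum.inl, allText_feas, ?_, (val_allText t b).symm⟩
      intro x hx
      rcases Finset.mem_image.mp hx with ⟨i, _, rfl⟩
      rw [Finset.mem_eraseNone]
      exact Finset.mem_insert_of_mem (Finset.mem_image_of_mem _ (Finset.mem_univ i))
    refine hw.trans ((hcons S₂).trans (le_of_eq ?_))
    rw [hS₂, Finset.sum_insert (by simp),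
      Finset.sum_image (fun _ _ _ _ h => Sum.inl.inj (Option.some.inj h))]
  have hminmax : min (∑ i, t i) b + max (∑ i, t i) b = (∑ i, t i) + b :=
    min_add_max _ _
  linarith

lemma sum_payI_le {k : ℕ} (xI : (Fin k → ℝ) → ℝ → ℝ) (t : Fin k → ℝ)
    (hbox : ∀ t b, xI t b ∈ Set.Icc (0:ℝ) 1)
    (hmono : ∀ t (b₁ b₂ : ℝ), b₁ ≤ b₂ → xI t b₁ ≤ xI t b₂)
    (hH : 0 < Hceil k) :
    ∑ c : Fin (Hceil k), payI xI t (imval k c) ≤ (Hceil k : ℝ) := by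
  have hM : (0:ℝ) < (Hceil k : ℝ) := by exact_mod_cast hH
  have := grid_bound (Hceil k : ℝ) hM (xI t) (fun b₁ b₂ h => hmono t b₁ b₂ h)
    (fun s => (hbox t s).1) (fun s => (hbox t s).2) (Hceil k)
  refine le_trans (le_of_eq ?_) this
  calc ∑ c : Fin (Hceil k), payI xI t (imval k c)
      = ∑ j ∈ Finset.range (Hceil k), payI xI t ((Hceil k : ℝ)/((j:ℝ)+1)) :=
        Fin.sum_univ_eq_sum_range (fun j : ℕ => payI xI t ((Hceil k : ℝ)/((j:ℝ)+1))) (Hceil k)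
    _ = ∑ j ∈ Finset.range (Hceil k), ((Hceil k : ℝ)/((j:ℝ)+1) * xI t ((Hceil k : ℝ)/((j:ℝ)+1))
          - ∫ s in (0:ℝ)..((Hceil k : ℝ)/((j:ℝ)+1)), xI t s) :=
        Finset.sum_congr rfl (fun j _ => rfl)

lemma sum_payT_le {k : ℕ} (hk : 0 < k) (xT : (Fin k → ℝ) → ℝ → Fin k → ℝ) (b : ℝ) (i : Fin k)
    (hbox : ∀ t b i, xT t b i ∈ Set.Icc (0:ℝ) 1)
    (hmono : ∀ t b (i : Fin k) (v₁ v₂ : ℝ), v₁ ≤ v₂ →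
      xT (Function.update t i v₁) b i ≤ xT (Function.update t i v₂) b i) :
    ∑ a : Fin k → Fin k, payT xT (tprof k a) b i ≤ ((k:ℝ))^(k-1) := by
  classical
  set e := Equiv.funSplitAt i (Fin k) with he
  have hsum : ∑ a : Fin k → Fin k, payT xT (tprof k a) b i
      = ∑ p : Fin k × ({j : Fin k // j ≠ i} → Fin k), payT xT (tprof k (e.symm p)) b i :=
    (Equiv.sum_comp e.symm (fun a => payT xT (tprof k a) b i)).symm
  rw [hsum, Fintype.sum_prod_type_right]
  have hbound : ∀ r : {j : Fin k // j ≠ i} → Fin k,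
      ∑ x : Fin k, payT xT (tprof k (e.symm (x, r))) b i ≤ 1 := by
    intro r
    set x₀ : Fin k := ⟨0, hk⟩ with hx₀
    set t₀ : Fin k → ℝ := tprof k (e.symm (x₀, r)) with ht₀
    set g : ℝ → ℝ := fun s => xT (Function.update t₀ i s) b i with hg
    have hupdate : ∀ x : Fin k, e.symm (x, r) = Function.update (e.symm (x₀, r)) i x := by
      intro x
      funext l
      rcases eq_or_ne l i with rfl | hl
      · rw [Function.update_self, he, Equiv.funSplitAt_symm_apply, dif_pos rfl]
      · rw [Function.update_of_ne hl, he, Equiv.funSplitAt_symm_apply,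
          Equiv.funSplitAt_symm_apply, dif_neg hl, dif_neg hl]
    have htprof : ∀ x : Fin k, tprof k (e.symm (x, r))
        = Function.update t₀ i (1/((x:ℕ)+1)) := by
      intro x
      funext l
      rcases eq_or_ne l i with rfl | hl
      · rw [hupdate x]
        simp [tprof, ht₀, Function.update_self]
      · rw [hupdate x, Function.update_of_ne hl]
        simp [tprof, ht₀, Function.update_of_ne hl]
    have hpay : ∀ x : Fin k, payT xT (tprof k (e.symm (x, r))) b i
        = (1:ℝ)/((x:ℕ)+1) * g ((1:ℝ)/((x:ℕ)+1))
          - ∫ s in (0:ℝ)..((1:ℝ)/((x:ℕ)+1)), g s := by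
      intro x
      rw [htprof x]
      unfold payT
      rw [Function.update_self]
      simp only [hg, Function.update_idem]
    have hgm : Monotone g := fun s₁ s₂ h => hmono t₀ b i s₁ s₂ h
    have := grid_bound 1 one_pos g hgm
      (fun s => (hbox _ b i).1) (fun s => (hbox _ b i).2) k
    refine le_trans (le_of_eq ?_) this
    calc ∑ x : Fin k, payT xT (tprof k (e.symm (x, r))) b i
        = ∑ x : Fin k, ((1:ℝ)/(((x:ℕ):ℝ)+1) * g ((1:ℝ)/(((x:ℕ):ℝ)+1))
            - ∫ s in (0:ℝ)..((1:ℝ)/(((x:ℕ):ℝ)+1)), g s) :=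
          Finset.sum_congr rfl (fun x _ => hpay x)
      _ = ∑ j ∈ Finset.range k, ((1:ℝ)/((j:ℝ)+1) * g ((1:ℝ)/((j:ℝ)+1))
            - ∫ s in (0:ℝ)..((1:ℝ)/((j:ℝ)+1)), g s) :=
          Fin.sum_univ_eq_sum_range (fun j : ℕ => (1:ℝ)/((j:ℝ)+1) * g ((1:ℝ)/((j:ℝ)+1))
            - ∫ s in (0:ℝ)..((1:ℝ)/((j:ℝ)+1)), g s) k
  calc ∑ r : {j : Fin k // j ≠ i} → Fin k, ∑ x : Fin k, payT xT (tprof k (e.symm (x, r))) b i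
      ≤ ∑ _r : {j : Fin k // j ≠ i} → Fin k, (1:ℝ) :=
        Finset.sum_le_sum (fun r _ => hbound r)
    _ = (Fintype.card ({j : Fin k // j ≠ i} → Fin k) : ℝ) := by
        rw [Finset.sum_const, Finset.card_univ, nsmul_eq_mul, mul_one]
    _ = ((k:ℝ))^(k-1) := by
        rw [Fintype.card_fun]
        have h1 : Fintype.card {j : Fin k // j ≠ i} = k - 1 := by
          rw [Fintype.card_subtype_compl]
          simp
        rw [h1, Fintype.card_fin]
        push_cast
        rfl

lemma var_bound {k : ℕ} (hk : 0 < k) :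
    ∑ a : Fin k → Fin k, ((∑ i, tprof k a i) - Hk k)^2 ≤ 2 * (k:ℝ)^k := by
  classical
  have hk' : ((k:ℝ)) ≠ 0 := by positivity
  set μ : ℝ := Hk k / k with hμ
  set f : Fin k → ℝ := fun j => 1/(((j:ℕ):ℝ)+1) - μ with hf
  have hHk : ∑ j : Fin k, 1/(((j:ℕ):ℝ)+1) = Hk k := by
    rw [Fin.sum_univ_eq_sum_range (fun j : ℕ => 1/((j:ℝ)+1)) k]
    rfl
  have hsumf : ∑ j : Fin k, f j = 0 := by
    simp only [hf]
    rw [Finset.sum_sub_distrib, hHk, Finset.sum_const, Finset.card_univ, Fintype.card_fin,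
      nsmul_eq_mul, hμ]
    field_simp
    ring
  have hdev : ∀ a : Fin k → Fin k, (∑ i, tprof k a i) - Hk k = ∑ i, f (a i) := by
    intro a
    simp only [hf]
    rw [Finset.sum_sub_distrib, Finset.sum_const, Finset.card_univ, Fintype.card_fin,
      nsmul_eq_mul, hμ]
    have : (k:ℝ) * (Hk k / k) = Hk k := by field_simp
    rw [this]
    rfl
  have hS : ∑ x : Fin k, (f x)^2 ≤ 2 := by
    have hexp : ∀ x : Fin k, (f x)^2 = (1/(((x:ℕ):ℝ)+1))^2 - 2*μ*(1/(((x:ℕ):ℝ)+1)) + μ^2 := by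
      intro x; simp only [hf]; ring
    rw [Finset.sum_congr rfl (fun x _ => hexp x)]
    rw [Finset.sum_add_distrib, Finset.sum_sub_distrib, ← Finset.mul_sum, hHk,
      Finset.sum_const, Finset.card_univ, Fintype.card_fin, nsmul_eq_mul]
    have hsq : ∑ x : Fin k, (1/(((x:ℕ):ℝ)+1))^2 ≤ 2 := by
      rw [Fin.sum_univ_eq_sum_range (fun j : ℕ => (1/((j:ℝ)+1))^2) k]
      exact sq_sum_le' k
    have hμval : -(2*μ*Hk k) + (k:ℝ)*μ^2 ≤ 0 := by
      rw [hμ]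
      have h0 : 0 ≤ Hk k := Finset.sum_nonneg (fun j _ => by positivity)
      have : (k:ℝ) * (Hk k / k)^2 = Hk k^2 / k := by field_simp
      rw [this]
      have : 2 * (Hk k / k) * Hk k = 2 * (Hk k^2 / k) := by field_simp
      rw [this]
      have hpos : 0 ≤ Hk k^2 / k := by positivity
      linarith
    linarith
  have hpair : ∀ i i' : Fin k, ∑ a : Fin k → Fin k, f (a i) * f (a i')
      = if i = i' then (∑ x, (f x)^2) * (k:ℝ)^(k-1) else 0 := by
    intro i i'
    set h : Fin k → Fin k → ℝ :=
      fun l x => (if l = i then f x else 1) * (if l = i' then f x else 1) with hh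
    have step1 : ∀ a : Fin k → Fin k, f (a i) * f (a i') = ∏ l, h l (a l) := by
      intro a
      simp only [hh]
      rw [Finset.prod_mul_distrib]
      rw [Finset.prod_ite_eq' Finset.univ i (fun l => f (a l)),
        Finset.prod_ite_eq' Finset.univ i' (fun l => f (a l))]
      simp
    have step2 : ∑ a : Fin k → Fin k, ∏ l, h l (a l) = ∏ l, ∑ x, h l x := by
      rw [Finset.prod_univ_sum (fun _ => Finset.univ) h]
      rw [Fintype.piFinset_univ]
    rw [Finset.sum_congr rfl (fun a _ => step1 a), step2]
    by_cases hii : i = i'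
    · subst hii
      rw [if_pos rfl]
      have hl : ∀ l : Fin k, ∑ x, h l x = if l = i then (∑ x, (f x)^2) else (k:ℝ) := by
        intro l
        by_cases hli : l = i
        · subst hli
          rw [if_pos rfl]
          refine Finset.sum_congr rfl (fun x _ => ?_)
          simp [hh, pow_two]
        · rw [if_neg hli]
          simp [hh, hli]
      rw [Finset.prod_congr rfl (fun l _ => hl l)]
      rw [← Finset.mul_prod_erase Finset.univ _ (Finset.mem_univ i), if_pos rfl]
      congr 1
      rw [Finset.prod_congr rfl (fun l hl' => if_neg (Finset.ne_of_mem_erase hl')),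
        Finset.prod_const, Finset.card_erase_of_mem (Finset.mem_univ i),
        Finset.card_univ, Fintype.card_fin]
    · rw [if_neg hii]
      refine Finset.prod_eq_zero (Finset.mem_univ i) ?_
      have : ∀ x : Fin k, h i x = f x := by
        intro x; simp [hh, hii]
      rw [Finset.sum_congr rfl (fun x _ => this x)]
      exact hsumf
  calc ∑ a : Fin k → Fin k, ((∑ i, tprof k a i) - Hk k)^2
      = ∑ a : Fin k → Fin k, ∑ i : Fin k, ∑ i' : Fin k, f (a i) * f (a i') := by
        refine Finset.sum_congr rfl (fun a _ => ?_)
        rw [hdev a, pow_two, Finset.sum_mul_sum]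
    _ = ∑ i : Fin k, ∑ i' : Fin k, ∑ a : Fin k → Fin k, f (a i) * f (a i') := by
        rw [Finset.sum_comm]
        exact Finset.sum_congr rfl (fun i _ => Finset.sum_comm)
    _ = ∑ i : Fin k, (∑ x, (f x)^2) * (k:ℝ)^(k-1) := by
        refine Finset.sum_congr rfl (fun i _ => ?_)
        rw [Finset.sum_congr rfl (fun i' _ => hpair i i')]
        simp
    _ = (k:ℝ) * ((∑ x, (f x)^2) * (k:ℝ)^(k-1)) := by
        rw [Finset.sum_const, Finset.card_univ, Fintype.card_fin, nsmul_eq_mul]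
    _ ≤ (k:ℝ) * (2 * (k:ℝ)^(k-1)) := by
        have hknn : (0:ℝ) ≤ (k:ℝ) := by positivity
        have hpow : (0:ℝ) ≤ (k:ℝ)^(k-1) := by positivity
        exact mul_le_mul_of_nonneg_left (mul_le_mul_of_nonneg_right hS hpow) hknn
    _ = 2 * (k:ℝ)^k := by
        obtain ⟨m, rfl⟩ : ∃ m, k = m + 1 := ⟨k - 1, (Nat.succ_pred_eq_of_pos hk).symm⟩
        simp only [Nat.add_sub_cancel, pow_succ]
        ring

end CoreComp

set_option maxHeartbeats 2000000

open CoreComp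

/-- There are `c > 0` and `k₀` such that for every `k ≥ k₀` and every
truthful, individually rational randomized mechanism `(xT, xI)` for the environment with
`k` text ads and one image ad, some valuation profile in the support of `D` has
`CoreRev(v) ≥ c·ln(ln k)·∑ᵢ pᵢ(v)`.  Hence every truthful randomized mechanism has
core-competitive factor `Ω(ln(ln k))`. -/
theorem rand_lower_bound :
    ∃ c : ℝ, 0 < c ∧ ∃ k₀ : ℕ, ∀ k : ℕ, k₀ ≤ k →
      ∀ (xT : (Fin k → ℝ) → ℝ → Fin k → ℝ) (xI : (Fin k → ℝ) → ℝ → ℝ),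
        (∀ t b i, xT t b i ∈ Set.Icc (0:ℝ) 1) →
        (∀ t b, xI t b ∈ Set.Icc (0:ℝ) 1) →
        (∀ t b i, xT t b i + xI t b ≤ 1) →
        (∀ t b (i : Fin k) (v₁ v₂ : ℝ), v₁ ≤ v₂ →
          xT (Function.update t i v₁) b i ≤ xT (Function.update t i v₂) b i) →
        (∀ t (b₁ b₂ : ℝ), b₁ ≤ b₂ → xI t b₁ ≤ xI t b₂) →
        ∃ (a : Fin k → Fin k) (cI : Fin (Hceil k)),
          c * Real.log (Real.log k) *
              ((∑ i, payT xT (tprof k a) (imval k cI) i) +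
                payI xI (tprof k a) (imval k cI)) ≤
            CoreRev (Feas1 k) (Sum.elim (tprof k a) (fun _ => imval k cI)) := by
  classical
  refine ⟨1/16, by norm_num, 10^11, ?_⟩
  intro k hk xT xI hboxT hboxI hfeas hmonoT hmonoI
  have hk0 : 0 < k := lt_of_lt_of_le (by norm_num) hk
  have hkR : (0:ℝ) < (k:ℝ) := by exact_mod_cast hk0
  -- basic numeric facts
  have hexp1 : Real.exp 1 ≤ 3 := by
    have := Real.exp_one_lt_d9
    linarith
  have hexp21 : Real.exp 21 ≤ (k:ℝ) := by
    have h1 : Real.exp 21 = (Real.exp 1)^(21:ℕ) := by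
      rw [Real.exp_one_pow]; norm_num
    have h2 : (Real.exp 1)^(21:ℕ) ≤ (3:ℝ)^(21:ℕ) :=
      pow_le_pow_left₀ (Real.exp_pos 1).le hexp1 21
    have h3 : (3:ℝ)^(21:ℕ) ≤ (k:ℝ) := by
      have : ((10:ℕ)^11 : ℝ) ≤ (k:ℝ) := by exact_mod_cast hk
      norm_num at this ⊢
      linarith
    linarith [h1 ▸ h2]
  have hlogk : (21:ℝ) ≤ Real.log k := (Real.le_log_iff_exp_le hkR).mpr hexp21
  have hlogk0 : (0:ℝ) < Real.log k := by linarith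
  have hHk21 : (21:ℝ) ≤ Hk k := by
    have h1 : Real.log k ≤ Real.log ((k:ℝ)+1) := Real.log_le_log hkR (by linarith)
    linarith [log_le_Hk k]
  have hHk0 : (0:ℝ) ≤ Hk k := by linarith
  have hlogkHk : Real.log k ≤ Hk k := by
    have h1 : Real.log k ≤ Real.log ((k:ℝ)+1) := Real.log_le_log hkR (by linarith)
    linarith [log_le_Hk k]
  set H : ℕ := Hceil k with hH
  have hHge : Hk k ≤ (H:ℝ) := Nat.le_ceil _
  have hHle : (H:ℝ) ≤ Hk k + 1 := (Nat.ceil_lt_add_one hHk0).le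
  have hH0 : 0 < H := by
    have : (0:ℝ) < (H:ℝ) := by linarith
    exact_mod_cast this
  have hHR : (0:ℝ) < (H:ℝ) := by linarith
  set L : ℝ := Real.log (Real.log k) with hL
  have hexp3 : Real.exp 3 ≤ Real.log k := by
    have h1 : Real.exp 3 = (Real.exp 1)^(3:ℕ) := by rw [Real.exp_one_pow]; norm_num
    have h2 : (Real.exp 1)^(3:ℕ) ≤ (2.7182818286:ℝ)^(3:ℕ) :=
      pow_le_pow_left₀ (Real.exp_pos 1).le Real.exp_one_lt_d9.le 3
    have h3 : (2.7182818286:ℝ)^(3:ℕ) ≤ 21 := by norm_num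
    linarith [h1 ▸ h2]
  have hL3 : (3:ℝ) ≤ L := by
    have := Real.log_le_log (Real.exp_pos 3) hexp3
    rwa [Real.log_exp] at this
  have hHH : L ≤ Hk H := by
    have h1 : Real.log (Real.log k) ≤ Real.log ((H:ℝ)+1) :=
      Real.log_le_log hlogk0 (by linarith)
    linarith [log_le_Hk H]
  -- payment bound
  have hpayT : ∀ c : Fin H, ∑ a : Fin k → Fin k, ∑ i, payT xT (tprof k a) (imval k c) i
      ≤ (k:ℝ)^k := by
    intro c
    rw [Finset.sum_comm]
    calc ∑ i : Fin k, ∑ a : Fin k → Fin k, payT xT (tprof k a) (imval k c) i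
        ≤ ∑ _i : Fin k, ((k:ℝ))^(k-1) := Finset.sum_le_sum
          (fun i _ => sum_payT_le hk0 xT (imval k c) i hboxT hmonoT)
      _ = (k:ℝ) * (k:ℝ)^(k-1) := by
          rw [Finset.sum_const, Finset.card_univ, Fintype.card_fin, nsmul_eq_mul]
      _ = (k:ℝ)^k := by
          obtain ⟨m, rfl⟩ : ∃ m, k = m + 1 := ⟨k - 1, (Nat.succ_pred_eq_of_pos hk0).symm⟩
          simp only [Nat.add_sub_cancel, pow_succ]
          ring
  have hpayI : ∀ a : Fin k → Fin k, ∑ c : Fin H, payI xI (tprof k a) (imval k c) ≤ (H:ℝ) :=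
    fun a => sum_payI_le xI (tprof k a) hboxI hmonoI hH0
  have hP : ∑ p : (Fin k → Fin k) × Fin H,
      ((∑ i, payT xT (tprof k p.1) (imval k p.2) i) + payI xI (tprof k p.1) (imval k p.2))
      ≤ 2 * (k:ℝ)^k * (H:ℝ) := by
    rw [Fintype.sum_prod_type]
    have hsplit : ∀ a : Fin k → Fin k, ∑ c : Fin H,
        ((∑ i, payT xT (tprof k a) (imval k c) i) + payI xI (tprof k a) (imval k c))
        = (∑ c : Fin H, ∑ i, payT xT (tprof k a) (imval k c) i)
          + ∑ c : Fin H, payI xI (tprof k a) (imval k c) :=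
      fun a => Finset.sum_add_distrib
    rw [Finset.sum_congr rfl (fun a _ => hsplit a), Finset.sum_add_distrib]
    have h1 : ∑ a : Fin k → Fin k, ∑ c : Fin H, ∑ i, payT xT (tprof k a) (imval k c) i
        ≤ (H:ℝ) * (k:ℝ)^k := by
      rw [Finset.sum_comm]
      calc ∑ c : Fin H, ∑ a : Fin k → Fin k, ∑ i, payT xT (tprof k a) (imval k c) i
          ≤ ∑ _c : Fin H, (k:ℝ)^k := Finset.sum_le_sum (fun c _ => hpayT c)
        _ = (H:ℝ) * (k:ℝ)^k := by
            rw [Finset.sum_const, Finset.card_univ, Fintype.card_fin, nsmul_eq_mul]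
    have h2 : ∑ a : Fin k → Fin k, ∑ c : Fin H, payI xI (tprof k a) (imval k c)
        ≤ (k:ℝ)^k * (H:ℝ) := by
      calc ∑ a : Fin k → Fin k, ∑ c : Fin H, payI xI (tprof k a) (imval k c)
          ≤ ∑ _a : Fin k → Fin k, (H:ℝ) := Finset.sum_le_sum (fun a _ => hpayI a)
        _ = (k:ℝ)^k * (H:ℝ) := by
            rw [Finset.sum_const, Finset.card_univ, Fintype.card_fun, Fintype.card_fin,
              nsmul_eq_mul]
            push_cast
            ring
    linarith
  -- CoreRev bound
  have htpos : ∀ (a : Fin k → Fin k) (i : Fin k), 0 < tprof k a i := by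
    intro a i
    unfold tprof
    positivity
  have hbpos : ∀ c : Fin H, 0 < imval k c := by
    intro c
    unfold imval
    positivity
  have hCRpt : ∀ (a : Fin k → Fin k) (c : Fin H),
      min (∑ i, tprof k a i) (imval k c)
        ≤ CoreRev (Feas1 k) (Sum.elim (tprof k a) (fun _ => imval k c)) :=
    fun a c => coreRev_ge_min (tprof k a) (imval k c) (htpos a) (hbpos c)
  -- Chebyshev
  have hcard_univ : ((Fintype.card (Fin k → Fin k)) : ℝ) = (k:ℝ)^k := by
    rw [Fintype.card_fun, Fintype.card_fin]
    push_cast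
    ring
  set G : Finset (Fin k → Fin k) :=
    Finset.univ.filter (fun a => Hk k - 2 ≤ ∑ i, tprof k a i) with hG
  have hgood : (k:ℝ)^k / 2 ≤ (G.card : ℝ) := by
    set Bset : Finset (Fin k → Fin k) :=
      Finset.univ.filter (fun a => ¬ (Hk k - 2 ≤ ∑ i, tprof k a i)) with hBset
    have hbad : (Bset.card : ℝ) * 4 ≤ 2 * (k:ℝ)^k := by
      have h1 : ∀ a ∈ Bset, (4:ℝ) ≤ ((∑ i, tprof k a i) - Hk k)^2 := by
        intro a ha
        have := (Finset.mem_filter.mp ha).2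
        push_neg at this
        nlinarith
      calc (Bset.card : ℝ) * 4 = ∑ _a ∈ Bset, (4:ℝ) := by
            rw [Finset.sum_const, nsmul_eq_mul]
        _ ≤ ∑ a ∈ Bset, ((∑ i, tprof k a i) - Hk k)^2 := Finset.sum_le_sum h1
        _ ≤ ∑ a : Fin k → Fin k, ((∑ i, tprof k a i) - Hk k)^2 :=
            Finset.sum_le_sum_of_subset_of_nonneg (Finset.filter_subset _ _)
              (fun a _ _ => sq_nonneg _)
        _ ≤ 2 * (k:ℝ)^k := var_bound hk0
    have hsplit : (G.card : ℝ) + (Bset.card : ℝ) = (k:ℝ)^k := by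
      rw [← hcard_univ]
      have h2 : G.card + Bset.card = Fintype.card (Fin k → Fin k) := by
        have := Finset.card_filter_add_card_filter_not
          (s := (Finset.univ : Finset (Fin k → Fin k)))
          (p := fun a => Hk k - 2 ≤ ∑ i, tprof k a i)
        rw [hG, hBset, ← Finset.card_univ]
        convert this using 3
      exact_mod_cast h2
    linarith
  -- the lower-bound weight function
  set S₃ : ℝ := ∑ c : Fin H, (if 2 ≤ (c:ℕ) then (H:ℝ)/((c:ℕ)+1) else 0) with hS₃def
  have hHkH : ∑ c : Fin H, (H:ℝ)/((c:ℕ)+1) = (H:ℝ) * Hk H := by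
    rw [Fin.sum_univ_eq_sum_range (fun j : ℕ => (H:ℝ)/((j:ℝ)+1)) H]
    unfold Hk
    rw [Finset.mul_sum]
    refine Finset.sum_congr rfl (fun j _ => ?_)
    ring
  have hS₃ : (H:ℝ) * (Hk H - 3/2) ≤ S₃ := by
    have hsum3 : ∑ c : Fin H, (H:ℝ)/((c:ℕ)+1)
        = S₃ + ∑ c : Fin H, (if (c:ℕ) = 0 then (H:ℝ)/((c:ℕ)+1) else 0)
          + ∑ c : Fin H, (if (c:ℕ) = 1 then (H:ℝ)/((c:ℕ)+1) else 0) := by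
      rw [hS₃def, ← Finset.sum_add_distrib, ← Finset.sum_add_distrib]
      refine Finset.sum_congr rfl (fun c _ => ?_)
      rcases Nat.lt_or_ge (c:ℕ) 2 with hc | hc
      · interval_cases h : (c:ℕ) <;> simp
      · rw [if_pos hc, if_neg (by omega), if_neg (by omega)]
        ring
    have h0mem : ∑ c : Fin H, (if (c:ℕ) = 0 then (H:ℝ)/((c:ℕ)+1) else 0) ≤ (H:ℝ) := by
      rw [Fin.sum_univ_eq_sum_range (fun j : ℕ => if j = 0 then (H:ℝ)/((j:ℝ)+1) else 0) H,
        Finset.sum_ite_eq' (Finset.range H) 0 (fun j : ℕ => (H:ℝ)/((j:ℝ)+1)),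
        if_pos (Finset.mem_range.mpr hH0)]
      norm_num
    have h1mem : ∑ c : Fin H, (if (c:ℕ) = 1 then (H:ℝ)/((c:ℕ)+1) else 0) ≤ (H:ℝ)/2 := by
      have hH1 : 1 < H := by
        have : (1:ℝ) < (H:ℝ) := by linarith
        exact_mod_cast this
      rw [Fin.sum_univ_eq_sum_range (fun j : ℕ => if j = 1 then (H:ℝ)/((j:ℝ)+1) else 0) H,
        Finset.sum_ite_eq' (Finset.range H) 1 (fun j : ℕ => (H:ℝ)/((j:ℝ)+1)),
        if_pos (Finset.mem_range.mpr hH1)]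
      norm_num
    rw [hHkH] at hsum3
    nlinarith
  have hS₃0 : 0 ≤ S₃ := Finset.sum_nonneg (fun c _ => by positivity)
  -- pointwise CoreRev lower bound
  have hCRlow : ∀ (a : Fin k → Fin k) (c : Fin H),
      (if (Hk k - 2 ≤ ∑ i, tprof k a i) ∧ 2 ≤ (c:ℕ) then (H:ℝ)/((c:ℕ)+1) else 0)
        ≤ CoreRev (Feas1 k) (Sum.elim (tprof k a) (fun _ => imval k c)) := by
    intro a c
    split_ifs with hcond
    · obtain ⟨hga, hc2⟩ := hcond
      have hb3 : imval k c ≤ (H:ℝ)/3 := by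
        unfold imval
        apply div_le_div_of_nonneg_left hHR.le (by norm_num)
        push_cast
        have : (2:ℝ) ≤ (c:ℕ) := by exact_mod_cast hc2
        linarith
      have hble : imval k c ≤ ∑ i, tprof k a i := by
        have : (H:ℝ)/3 ≤ Hk k - 2 := by linarith
        linarith
      have := hCRpt a c
      rw [min_eq_right hble] at this
      exact le_trans (le_of_eq rfl) this
    · refine le_trans ?_ (hCRpt a c)
      have h1 : 0 < ∑ i, tprof k a i := Finset.sum_pos (fun i _ => htpos a i) ⟨⟨0, hk0⟩, Finset.mem_univ _⟩
      have h2 := hbpos c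
      positivity
  -- total CoreRev bound
  have hCRsum : (k:ℝ)^k / 2 * ((H:ℝ) * (Hk H - 3/2))
      ≤ ∑ p : (Fin k → Fin k) × Fin H,
          CoreRev (Feas1 k) (Sum.elim (tprof k p.1) (fun _ => imval k p.2)) := by
    have hstep : ∑ p : (Fin k → Fin k) × Fin H,
        (if (Hk k - 2 ≤ ∑ i, tprof k p.1 i) ∧ 2 ≤ ((p.2:ℕ)) then (H:ℝ)/(((p.2:ℕ))+1) else 0)
        ≤ ∑ p : (Fin k → Fin k) × Fin H,
          CoreRev (Feas1 k) (Sum.elim (tprof k p.1) (fun _ => imval k p.2)) :=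
      Finset.sum_le_sum (fun p _ => hCRlow p.1 p.2)
    refine le_trans ?_ hstep
    rw [Fintype.sum_prod_type]
    have hinner : ∀ a : Fin k → Fin k,
        ∑ c : Fin H, (if (Hk k - 2 ≤ ∑ i, tprof k a i) ∧ 2 ≤ ((c:ℕ)) then (H:ℝ)/(((c:ℕ))+1) else 0)
        = if (Hk k - 2 ≤ ∑ i, tprof k a i) then S₃ else 0 := by
      intro a
      split_ifs with hga
      · rw [hS₃def]
        exact Finset.sum_congr rfl (fun c _ => by simp [hga])
      · refine Finset.sum_eq_zero (fun c _ => ?_)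
        rw [if_neg]
        exact fun h => hga h.1
    rw [Finset.sum_congr rfl (fun a _ => hinner a)]
    rw [← Finset.sum_filter, ← hG, Finset.sum_const, nsmul_eq_mul]
    have hnn1 : 0 ≤ (H:ℝ) * (Hk H - 3/2) := by nlinarith [hHH, hL3, hHR]
    exact mul_le_mul hgood hS₃ hnn1 (Nat.cast_nonneg _)
  -- combine
  have hnonempty : (Finset.univ : Finset ((Fin k → Fin k) × Fin H)).Nonempty :=
    ⟨⟨fun _ => ⟨0, hk0⟩, ⟨0, hH0⟩⟩, Finset.mem_univ _⟩
  have hL0 : (0:ℝ) < L := by linarith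
  have hfinal : ∑ p : (Fin k → Fin k) × Fin H,
      (1/16 * L * ((∑ i, payT xT (tprof k p.1) (imval k p.2) i)
        + payI xI (tprof k p.1) (imval k p.2)))
      ≤ ∑ p : (Fin k → Fin k) × Fin H,
          CoreRev (Feas1 k) (Sum.elim (tprof k p.1) (fun _ => imval k p.2)) := by
    rw [← Finset.mul_sum]
    have h1 : 1/16 * L * (∑ p : (Fin k → Fin k) × Fin H,
        ((∑ i, payT xT (tprof k p.1) (imval k p.2) i) + payI xI (tprof k p.1) (imval k p.2)))
        ≤ 1/16 * L * (2 * (k:ℝ)^k * (H:ℝ)) := by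
      apply mul_le_mul_of_nonneg_left hP
      positivity
    refine h1.trans (le_trans ?_ hCRsum)
    have hLH : L/4 ≤ Hk H - 3/2 := by linarith
    have hkk : (0:ℝ) ≤ (k:ℝ)^k := by positivity
    calc 1/16 * L * (2 * (k:ℝ)^k * (H:ℝ)) = ((k:ℝ)^k/2 * (H:ℝ)) * (L/4) := by ring
      _ ≤ ((k:ℝ)^k/2 * (H:ℝ)) * (Hk H - 3/2) := by
          apply mul_le_mul_of_nonneg_left hLH
          have : (0:ℝ) ≤ (H:ℝ) := hHR.le
          nlinarith
      _ = (k:ℝ)^k/2 * ((H:ℝ) * (Hk H - 3/2)) := by ring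
  obtain ⟨p, _, hp⟩ := Finset.exists_le_of_sum_le hnonempty hfinal
  exact ⟨p.1, p.2, hp⟩
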